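/- Let v ∈ ℂ^N with v ≠ 0, let h be a positive-definite Hermitian N×N matrix, let P: ℂ^{1×N} → ℂ be a homogeneous polynomial function of degree p on row vectors, and let s ∈ ℂ. Then for all Hermitian N×N matrices H_0, …, H_{N−1}: Σ_{j=0}^{N−1} (−1)^j · (d/dt at t = 0 of [ (v*(h+tH_j)v)^{−s/2−N−p} · P(v*(h+tH_j)) · pbar(v, h+tH_j)(H_0, …, H_{j−1}, H_{j+1}, …, H_{N−1}) ]) = −(s/(2N)) · (v*hv)^{−s/2−N−p} · P(v*h) · dpbar(v)(H_0, …, H_{N−1}). (Multiplying both sides by Γ(N+p+s/2)/2 and by conj(Q(v)) for a polynomial Q gives the paper's formula dη(v, P⊗conj(Q), s) = c(s)(v*hv)^{−s/2−N−p} conj(Q(v)) P(v*h) dp̄(v) with c(s) = (−4N)^{−1} s Γ(N+p+s/2).) -/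

import Mathlib

/-! Write `w = -s/2 - N - p`. Along the line `h + tHⱼ` every ingredient is affine in `t`, so by
the product rule the derivative of the `j`-th term is
`Λ(v*Hⱼ) · pbar(v,h)(…) + (v*hv)^w P(v*h) · pbar(v,Hⱼ)(…)` for one linear form `Λ`, which
collects the contributions of `(v*gv)^w` and `P(v*g)`.

Let `M` be the matrix whose `l`-th column is `v*H_l` read bottom to top. Expanding the minors
in `pbar` as cofactors, `(-1)^j pbar(v,g)(H_0,…,Ĥⱼ,…)` is, up to a sign independent of `j`, the
`j`-th entry of `adj M` applied to the reversed vector `v*g`. Then `M · adj M = det M` collapses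
the first alternating sum to `Λ(v*h) · det M`, and `tr (adj M · M) = N det M` turns the second into
`dpbar(v)(H)`. Finally Euler's identity `dP(x)x = p P(x)` gives `Λ(v*h) = (w + p)(v*hv)^w P(v*h)`,
and `w + p + N = -s/2`. -/

open Matrix BigOperators

noncomputable section

/-- The `i`-th entry of the row vector `v* h`, where `v*` is the conjugate transpose of the
column vector `v`. -/
def vstarM {N : ℕ} (v : Fin N → ℂ) (h : Matrix (Fin N) (Fin N) ℂ) (i : Fin N) : ℂ :=
  ∑ j, (starRingEnd ℂ) (v j) * h j i

/-- The scalar `v* h v`. -/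
def vhv {N : ℕ} (v : Fin N → ℂ) (h : Matrix (Fin N) (Fin N) ℂ) : ℂ :=
  ∑ i, vstarM v h i * v i

/-- `pbar(v,h)(H_1,…,H_{N−1})` : the value of the `(N-1)`-form `p̄(v)` at the point `h` on
the tangent vectors `H_1,…,H_{N-1}`.  Here `N = n+2`; the matrix `M⁽ⁱ⁾` has `(k,l)`-entry
`(v*H_l)_{r_k}` where `r` is the decreasing enumeration of `{0,…,N-1}` omitting `i`
(`r k = Fin.rev ((Fin.rev i).succAbove k)`), and the sign `(−1)^{i−1}` (1-based) is
`(−1)^{i}` in 0-based indexing. -/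
def pbar {n : ℕ} (v : Fin (n + 2) → ℂ) (h : Matrix (Fin (n + 2)) (Fin (n + 2)) ℂ)
    (H : Fin (n + 1) → Matrix (Fin (n + 2)) (Fin (n + 2)) ℂ) : ℂ :=
  2 * (-1 : ℂ) ^ ((n + 2) * (n + 1) / 2) *
    ∑ i : Fin (n + 2), (-1 : ℂ) ^ (i : ℕ) * vstarM v h i *
      Matrix.det (Matrix.of fun k l : Fin (n + 1) =>
        vstarM v (H l) (Fin.rev ((Fin.rev i).succAbove k)))

/-- `dpbar(v)(H_1,…,H_N) = 2N(−1)^{(N+2)(N−1)/2} det M` where `M` has `(k,l)`-entry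
`(v*H_l)_{N+1−k}` (1-based), i.e. `(v*H_l)_{Fin.rev k}` in 0-based indexing. -/
def dpbar {n : ℕ} (v : Fin (n + 2) → ℂ)
    (H : Fin (n + 2) → Matrix (Fin (n + 2)) (Fin (n + 2)) ℂ) : ℂ :=
  2 * (n + 2) * (-1 : ℂ) ^ ((n + 4) * (n + 1) / 2) *
    Matrix.det (Matrix.of fun k l : Fin (n + 2) => vstarM v (H l) (Fin.rev k))
section Adjugate

variable {R ι : Type*} [CommRing R] [Fintype ι] [DecidableEq ι]

theorem Matrix.sum_map_col_mul_adjugate_mulVec (L : (ι → R) →ₗ[R] R) (M : Matrix ι ι R)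
    (y : ι → R) : ∑ j, L (fun i => M i j) * (adjugate M *ᵥ y) j = M.det * L y := by
  have hcols : M *ᵥ (adjugate M *ᵥ y) = ∑ j, (adjugate M *ᵥ y) j • fun i => M i j := by
    ext i; simp [mulVec, dotProduct, Finset.sum_apply, mul_comm]
  calc ∑ j, L (fun i => M i j) * (adjugate M *ᵥ y) j
      = L (M *ᵥ (adjugate M *ᵥ y)) := by simp [hcols, mul_comm]
    _ = M.det * L y := by
      rw [mulVec_mulVec, mul_adjugate, smul_mulVec, one_mulVec, map_smul, smul_eq_mul]

theorem Matrix.sum_adjugate_mulVec_col (M : Matrix ι ι R) :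
    ∑ j, (adjugate M *ᵥ fun i => M i j) j = Fintype.card ι * M.det := by
  calc ∑ j, (adjugate M *ᵥ fun i => M i j) j = trace (adjugate M * M) := rfl
    _ = Fintype.card ι * M.det := by
      rw [adjugate_mul, trace_smul, trace_one, smul_eq_mul, mul_comm]

end Adjugate

theorem Fin.neg_one_pow_rev {R : Type*} [Monoid R] [HasDistribNeg R] {N : ℕ} (k : Fin (N + 1)) :
    (-1 : R) ^ (Fin.rev k : ℕ) = (-1) ^ N * (-1) ^ (k : ℕ) := by
  have hN : N = (Fin.rev k : ℕ) + k := by simp only [Fin.val_rev]; omega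
  calc (-1 : R) ^ (Fin.rev k : ℕ) = (-1) ^ ((Fin.rev k : ℕ) + k) * (-1) ^ (k : ℕ) := by
        rw [pow_add, mul_assoc, ← pow_add, ← two_mul, pow_mul, neg_one_sq, one_pow, mul_one]
    _ = (-1) ^ N * (-1) ^ (k : ℕ) := by rw [← hN]

theorem neg_one_pow_div_two_mul_neg_one_pow_succ (R : Type*) [Monoid R] [HasDistribNeg R]
    (n : ℕ) :
    (-1 : R) ^ ((n + 2) * (n + 1) / 2) * (-1) ^ (n + 1) = (-1) ^ ((n + 4) * (n + 1) / 2) := by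
  rw [← pow_add, show (n + 4) * (n + 1) = (n + 2) * (n + 1) + 2 * (n + 1) by ring,
    Nat.add_mul_div_left _ _ two_pos]

theorem MvPolynomial.IsHomogeneous.eval_smul {σ R : Type*} [Fintype σ] [CommSemiring R]
    {P : MvPolynomial σ R} {p : ℕ} (hP : P.IsHomogeneous p) (c : R) (x : σ → R) :
    MvPolynomial.eval (c • x) P = c ^ p * MvPolynomial.eval x P := by
  rw [MvPolynomial.eval_eq', MvPolynomial.eval_eq', Finset.mul_sum]
  refine Finset.sum_congr rfl fun d hd => ?_
  have hdeg : ∑ i, d i = p := by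
    rw [← hP (MvPolynomial.mem_support_iff.mp hd), Finsupp.weight_apply,
      Finsupp.sum_fintype _ _ fun _ => by simp]
    simp
  simp only [Pi.smul_apply, smul_eq_mul, mul_pow, Finset.prod_mul_distrib,
    Finset.prod_pow_eq_pow_sum, hdeg]
  ring

theorem HasFDerivAt.apply_self_of_homogeneous {𝕜 E : Type*} [NontriviallyNormedField 𝕜]
    [NormedAddCommGroup E] [NormedSpace 𝕜 E] {f : E → 𝕜} {f' : E →L[𝕜] 𝕜} {x : E} {p : ℕ}
    (hf : HasFDerivAt f f' x) (hhom : ∀ c : 𝕜, f (c • x) = c ^ p * f x) :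
    f' x = p * f x := by
  have hscale : HasDerivAt (fun c : 𝕜 => c • x) x 1 := by
    simpa using (hasDerivAt_id (1 : 𝕜)).smul_const x
  have hcomp : HasDerivAt (fun c : 𝕜 => f (c • x)) (f' x) 1 :=
    hf.comp_hasDerivAt_of_eq 1 hscale (one_smul 𝕜 x).symm
  have hpow : HasDerivAt (fun c : 𝕜 => c ^ p * f x) (p * f x) 1 := by
    simpa using (hasDerivAt_pow p (1 : 𝕜)).mul_const (f x)
  exact hcomp.unique (by simpa only [hhom] using hpow)

theorem vstarM_add_smul {N : ℕ} (v : Fin N → ℂ) (g H : Matrix (Fin N) (Fin N) ℂ) (c : ℂ) :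
    vstarM v (g + c • H) = vstarM v g + c • vstarM v H := by
  ext i
  simp only [vstarM, Matrix.add_apply, Matrix.smul_apply, smul_eq_mul, Pi.add_apply,
    Pi.smul_apply, mul_add, Finset.sum_add_distrib, Finset.mul_sum, mul_left_comm c]

theorem vhv_eq_dotProduct_vstarM {N : ℕ} (v : Fin N → ℂ) (g : Matrix (Fin N) (Fin N) ℂ) :
    vhv v g = dotProductEquiv ℂ (Fin N) v (vstarM v g) := by
  simp only [vhv, dotProductEquiv_apply_apply, dotProduct, mul_comm (v _)]

theorem vhv_add_smul {N : ℕ} (v : Fin N → ℂ) (g H : Matrix (Fin N) (Fin N) ℂ) (c : ℂ) :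
    vhv v (g + c • H) = vhv v g + c * vhv v H := by
  simp only [vhv_eq_dotProduct_vstarM, vstarM_add_smul, map_add, map_smul, smul_eq_mul]

/-- The differential at `v*h` of `y ↦ (y ⬝ᵥ v)^w * f y`, where `L` is the differential of `f`. -/
def vhvCpowMulDeriv {N : ℕ} (v : Fin N → ℂ) (h : Matrix (Fin N) (Fin N) ℂ) (w : ℂ)
    (f : (Fin N → ℂ) → ℂ) (L : (Fin N → ℂ) →L[ℂ] ℂ) : Module.Dual ℂ (Fin N → ℂ) :=
  (w * vhv v h ^ (w - 1) * f (vstarM v h)) • dotProductEquiv ℂ (Fin N) v +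
    vhv v h ^ w • L.toLinearMap

theorem vhvCpowMulDeriv_apply_vstarM_self {N p : ℕ} {v : Fin N → ℂ}
    {h : Matrix (Fin N) (Fin N) ℂ} {f : (Fin N → ℂ) → ℂ} {L : (Fin N → ℂ) →L[ℂ] ℂ}
    (hf : HasFDerivAt f L (vstarM v h))
    (hhom : ∀ c : ℂ, f (c • vstarM v h) = c ^ p * f (vstarM v h))
    (w : ℂ) (hA : vhv v h ≠ 0) :
    vhvCpowMulDeriv v h w f L (vstarM v h) = (w + p) * vhv v h ^ w * f (vstarM v h) := by
  have hcpow : vhv v h ^ (w - 1) * vhv v h = vhv v h ^ w := by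
    rw [Complex.cpow_sub _ _ hA, Complex.cpow_one, div_mul_cancel₀ _ hA]
  simp only [vhvCpowMulDeriv, LinearMap.add_apply, LinearMap.smul_apply,
    ContinuousLinearMap.coe_coe, ← vhv_eq_dotProduct_vstarM, hf.apply_self_of_homogeneous hhom,
    smul_eq_mul]
  linear_combination w * f (vstarM v h) * hcpow

open scoped ComplexOrder

theorem vhv_mem_slitPlane {N : ℕ} {v : Fin N → ℂ} (hv : v ≠ 0) {h : Matrix (Fin N) (Fin N) ℂ}
    (hh : h.PosDef) : vhv v h ∈ Complex.slitPlane := by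
  have hpos : 0 < vhv v h := by
    have : vhv v h = star v ⬝ᵥ h *ᵥ v := by
      simp only [vhv, vstarM, dotProduct, mulVec, Finset.sum_mul, Finset.mul_sum]
      rw [Finset.sum_comm]
      exact Finset.sum_congr rfl fun j _ => Finset.sum_congr rfl fun i _ => by simp; ring
    exact this ▸ hh.dotProduct_mulVec_pos hv
  exact Complex.mem_slitPlane_iff_not_le_zero.2 hpos.not_ge

section Pbar

variable {n : ℕ}

def vstarMatrix (v : Fin (n + 2) → ℂ) (H : Fin (n + 2) → Matrix (Fin (n + 2)) (Fin (n + 2)) ℂ) :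
    Matrix (Fin (n + 2)) (Fin (n + 2)) ℂ :=
  Matrix.of fun k l => vstarM v (H l) (Fin.rev k)

theorem dpbar_eq_det_vstarMatrix (v : Fin (n + 2) → ℂ)
    (H : Fin (n + 2) → Matrix (Fin (n + 2)) (Fin (n + 2)) ℂ) :
    dpbar v H = (n + 2) * (2 * (-1) ^ ((n + 4) * (n + 1) / 2)) * (vstarMatrix v H).det := by
  rw [dpbar, vstarMatrix]; ring

theorem neg_one_pow_mul_pbar_eq_adjugate_mulVec (v : Fin (n + 2) → ℂ)
    (H : Fin (n + 2) → Matrix (Fin (n + 2)) (Fin (n + 2)) ℂ)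
    (g : Matrix (Fin (n + 2)) (Fin (n + 2)) ℂ) (j : Fin (n + 2)) :
    (-1) ^ (j : ℕ) * pbar v g (fun k => H (j.succAbove k))
      = 2 * (-1) ^ ((n + 4) * (n + 1) / 2) *
          (adjugate (vstarMatrix v H) *ᵥ (vstarM v g ∘ Fin.rev)) j := by
  simp only [pbar, mulVec, dotProduct, adjugate_fin_succ_eq_det_submatrix, Function.comp_apply,
    ← neg_one_pow_div_two_mul_neg_one_pow_succ, Finset.mul_sum]
  rw [← Equiv.sum_comp Fin.revPerm]
  refine Finset.sum_congr rfl fun k _ => ?_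
  have hminor : (vstarMatrix v H).submatrix k.succAbove j.succAbove
      = of fun a b => vstarM v (H (j.succAbove b)) (k.succAbove a).rev := rfl
  simp only [Fin.revPerm_apply, Fin.rev_rev, Fin.neg_one_pow_rev, hminor]
  ring

theorem sum_neg_one_pow_mul_map_mul_pbar (L : (Fin (n + 2) → ℂ) →ₗ[ℂ] ℂ) (v : Fin (n + 2) → ℂ)
    (H : Fin (n + 2) → Matrix (Fin (n + 2)) (Fin (n + 2)) ℂ)
    (g : Matrix (Fin (n + 2)) (Fin (n + 2)) ℂ) :
    ∑ j : Fin (n + 2), (-1) ^ (j : ℕ) * L (vstarM v (H j)) * pbar v g (fun k => H (j.succAbove k))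
      = 2 * (-1) ^ ((n + 4) * (n + 1) / 2) * (vstarMatrix v H).det * L (vstarM v g) := by
  set L' := L ∘ₗ LinearMap.funLeft ℂ ℂ Fin.rev
  have hcol : ∀ j, L' (fun i => vstarMatrix v H i j) = L (vstarM v (H j)) := fun j => by
    simp [L', LinearMap.funLeft, vstarMatrix, Function.comp_def]
  have hrow : L' (vstarM v g ∘ Fin.rev) = L (vstarM v g) := by
    simp [L', LinearMap.funLeft, Function.comp_def]
  calc ∑ j : Fin (n + 2), (-1) ^ (j : ℕ) * L (vstarM v (H j)) *
        pbar v g (fun k => H (j.succAbove k))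
      = 2 * (-1) ^ ((n + 4) * (n + 1) / 2) * ∑ j, L' (fun i => vstarMatrix v H i j) *
          (adjugate (vstarMatrix v H) *ᵥ (vstarM v g ∘ Fin.rev)) j := by
        rw [Finset.mul_sum]
        refine Finset.sum_congr rfl fun j _ => ?_
        rw [hcol, mul_right_comm, neg_one_pow_mul_pbar_eq_adjugate_mulVec]
        ring
    _ = _ := by rw [Matrix.sum_map_col_mul_adjugate_mulVec, hrow]; ring

theorem sum_neg_one_pow_mul_pbar_self (v : Fin (n + 2) → ℂ)
    (H : Fin (n + 2) → Matrix (Fin (n + 2)) (Fin (n + 2)) ℂ) :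
    ∑ j : Fin (n + 2), (-1) ^ (j : ℕ) * pbar v (H j) (fun k => H (j.succAbove k)) = dpbar v H := by
  have hcol : ∀ j, vstarM v (H j) ∘ Fin.rev = fun i => vstarMatrix v H i j := fun j => rfl
  simp only [neg_one_pow_mul_pbar_eq_adjugate_mulVec, ← Finset.mul_sum, hcol,
    sum_adjugate_mulVec_col, Fintype.card_fin, dpbar_eq_det_vstarMatrix]
  push_cast
  ring

theorem pbar_add_smul (v : Fin (n + 2) → ℂ) (g H : Matrix (Fin (n + 2)) (Fin (n + 2)) ℂ) (c : ℂ)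
    (K : Fin (n + 1) → Matrix (Fin (n + 2)) (Fin (n + 2)) ℂ) :
    pbar v (g + c • H) K = pbar v g K + c * pbar v H K := by
  simp only [pbar, vstarM_add_smul, Pi.add_apply, Pi.smul_apply, smul_eq_mul, Finset.mul_sum,
    ← Finset.sum_add_distrib]
  exact Finset.sum_congr rfl fun i _ => by ring

theorem hasDerivAt_vhv_cpow_mul_comp_vstarM_mul_pbar {f : (Fin (n + 2) → ℂ) → ℂ}
    {L : (Fin (n + 2) → ℂ) →L[ℂ] ℂ} {v : Fin (n + 2) → ℂ} {h : Matrix (Fin (n + 2)) (Fin (n + 2)) ℂ}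
    (hf : HasFDerivAt f L (vstarM v h)) (w : ℂ) (hA : vhv v h ∈ Complex.slitPlane)
    (H : Matrix (Fin (n + 2)) (Fin (n + 2)) ℂ)
    (K : Fin (n + 1) → Matrix (Fin (n + 2)) (Fin (n + 2)) ℂ) :
    HasDerivAt (fun t : ℝ => vhv v (h + (t : ℂ) • H) ^ w * f (vstarM v (h + (t : ℂ) • H)) *
        pbar v (h + (t : ℂ) • H) K)
      (vhvCpowMulDeriv v h w f L (vstarM v H) * pbar v h K +
        vhv v h ^ w * f (vstarM v h) * pbar v H K) 0 := by
  have hline : ∀ b e : ℂ, HasDerivAt (fun z : ℂ => b + z * e) e 0 := fun b e => by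
    simpa using ((hasDerivAt_id (0 : ℂ)).mul_const e).const_add b
  have hpow : HasDerivAt (fun z : ℂ => (vhv v h + z * vhv v H) ^ w)
      (w * vhv v h ^ (w - 1) * vhv v H) 0 := by
    simpa using (hline (vhv v h) (vhv v H)).cpow_const (by simpa using hA)
  have hcomp : HasDerivAt (fun z : ℂ => f (vstarM v h + z • vstarM v H)) (L (vstarM v H)) 0 := by
    have hl : HasDerivAt (fun z : ℂ => vstarM v h + z • vstarM v H) (vstarM v H) 0 := by
      simpa using ((hasDerivAt_id (0 : ℂ)).smul_const (vstarM v H)).const_add (vstarM v h)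
    exact hf.comp_hasDerivAt_of_eq 0 hl (by simp)
  have hF := (hpow.mul hcomp).mul (hline (pbar v h K) (pbar v H K))
  rw [← Complex.ofReal_zero] at hF
  convert hF.comp_ofReal using 1
  · ext t
    simp only [vhv_add_smul, vstarM_add_smul, pbar_add_smul, Pi.mul_apply]
  · simp only [vhvCpowMulDeriv, LinearMap.add_apply, LinearMap.smul_apply,
      ContinuousLinearMap.coe_coe, ← vhv_eq_dotProduct_vstarM, Pi.mul_apply, Complex.ofReal_zero,
      zero_mul, zero_smul, add_zero, smul_eq_mul]
    ring

end Pbar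

theorem d_eta_explicit_general {n : ℕ} (p : ℕ) (v : Fin (n + 2) → ℂ) (hv : v ≠ 0)
    (h : Matrix (Fin (n + 2)) (Fin (n + 2)) ℂ) (hh : h.PosDef)
    (P : MvPolynomial (Fin (n + 2)) ℂ) (hP : P.IsHomogeneous p)
    (s : ℂ)
    (H : Fin (n + 2) → Matrix (Fin (n + 2)) (Fin (n + 2)) ℂ) :
    ∑ j : Fin (n + 2), (-1 : ℂ) ^ (j : ℕ) *
        deriv (fun t : ℝ =>
          (vhv v (h + (t : ℂ) • H j)) ^ (-(s / 2) - (n + 2 : ℂ) - (p : ℂ)) *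
            MvPolynomial.eval (vstarM v (h + (t : ℂ) • H j)) P *
            pbar v (h + (t : ℂ) • H j) (fun k => H (j.succAbove k))) 0
      = -(s / (2 * (n + 2 : ℂ))) * (vhv v h) ^ (-(s / 2) - (n + 2 : ℂ) - (p : ℂ)) *
          MvPolynomial.eval (vstarM v h) P * dpbar v H := by
  set w : ℂ := -(s / 2) - (n + 2 : ℂ) - (p : ℂ)
  have hA : vhv v h ∈ Complex.slitPlane := vhv_mem_slitPlane hv hh
  obtain ⟨L, hL⟩ : DifferentiableAt ℂ (fun z => MvPolynomial.eval z P) (vstarM v h) :=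
    (AnalyticOnNhd.eval_mvPolynomial P _ trivial).differentiableAt
  have hEuler := vhvCpowMulDeriv_apply_vstarM_self hL (hP.eval_smul · _) w
    (Complex.slitPlane_ne_zero hA)
  calc _ = ∑ j : Fin (n + 2), (-1 : ℂ) ^ (j : ℕ) *
          (vhvCpowMulDeriv v h w _ L (vstarM v (H j)) * pbar v h (fun k => H (j.succAbove k)) +
            vhv v h ^ w * MvPolynomial.eval (vstarM v h) P *
              pbar v (H j) (fun k => H (j.succAbove k))) :=
        Finset.sum_congr rfl fun j _ => by
          rw [(hasDerivAt_vhv_cpow_mul_comp_vstarM_mul_pbar hL w hA (H j) _).deriv]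
    _ = 2 * (-1) ^ ((n + 4) * (n + 1) / 2) * (vstarMatrix v H).det *
            vhvCpowMulDeriv v h w _ L (vstarM v h) +
          vhv v h ^ w * MvPolynomial.eval (vstarM v h) P * dpbar v H := by
        rw [← sum_neg_one_pow_mul_map_mul_pbar, ← sum_neg_one_pow_mul_pbar_self, Finset.mul_sum,
          ← Finset.sum_add_distrib]
        exact Finset.sum_congr rfl fun j _ => by ring
    _ = _ := by
        rw [hEuler, dpbar_eq_det_vstarMatrix]
        field_simp
        ring

/-- `dη(v, P⊗conj(Q), s) = c(s)(v*hv)^{−s/2−N−p} conj(Q(v)) P(v*h) dp̄(v)`,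
in the normalized form: for `v ≠ 0`, `h` positive definite Hermitian, `P` homogeneous of
degree `p` on row vectors, `s ∈ ℂ`, and Hermitian `H_0,…,H_{N−1}`,
`Σ_j (−1)^j ∂_t|_{t=0}[ (v*(h+tH_j)v)^{−s/2−N−p} P(v*(h+tH_j))
    pbar(v,h+tH_j)(H_0,…,Ĥ_j,…,H_{N−1}) ]
  = −(s/(2N)) (v*hv)^{−s/2−N−p} P(v*h) dpbar(v)(H_0,…,H_{N−1})`
(here `c^w = exp(w log c)` is the complex power). -/
theorem d_eta_explicit {n : ℕ} (p : ℕ) (v : Fin (n + 2) → ℂ) (hv : v ≠ 0)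
    (h : Matrix (Fin (n + 2)) (Fin (n + 2)) ℂ) (hh : h.PosDef)
    (P : MvPolynomial (Fin (n + 2)) ℂ) (hP : P.IsHomogeneous p)
    (s : ℂ)
    (H : Fin (n + 2) → Matrix (Fin (n + 2)) (Fin (n + 2)) ℂ)
    (hH : ∀ j, (H j).IsHermitian) :
    ∑ j : Fin (n + 2), (-1 : ℂ) ^ (j : ℕ) *
        deriv (fun t : ℝ =>
          (vhv v (h + (t : ℂ) • H j)) ^ (-(s / 2) - (n + 2 : ℂ) - (p : ℂ)) *
            MvPolynomial.eval (vstarM v (h + (t : ℂ) • H j)) P *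
            pbar v (h + (t : ℂ) • H j) (fun k => H (j.succAbove k))) 0
      = -(s / (2 * (n + 2 : ℂ))) * (vhv v h) ^ (-(s / 2) - (n + 2 : ℂ) - (p : ℂ)) *
          MvPolynomial.eval (vstarM v h) P * dpbar v H :=
  d_eta_explicit_general p v hv h hh P hP s H

end
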